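/- arXiv:2204.02305 — 2 statements merged into one kernel-verified Lean document; each statement's English description precedes it below -/
import Mathlib

section
/- Let (T_n(t))_{t>0}, n ∈ ℕ, be a sequence of positive semigroups of kernel operators on a Polish space E, all bounded by a common constant M, increasing in n (T_n(t) ≤ T_{n+1}(t) for all n and t > 0), let (T(t))_{t>0} be the limit semigroup given by (T(t)f)(x) = lim_{n→∞}(T_n(t)f)(x), and let (R_n(λ))_{λ>0} and (R(λ))_{λ>0} be the Laplace transforms of T_n and T. Say that a pair (u,f) ∈ B_b(E) × B_b(E) belongs to the full generator A of T if R(1)(u − f) = u, and that (u_n, f_n) belongs to the full generator A_n of T_n if R_n(1)(u_n − f_n) = u_n. Then (u,f) ∈ A if and only if there exist sequences (u_n)_{n∈ℕ} and (f_n)_{n∈ℕ} in B_b(E) with (u_n, f_n) ∈ A_n for every n, sup_{n∈ℕ}(‖u_n‖_∞ + ‖f_n‖_∞) < ∞, and u_n(x) → u(x) and f_n(x) → f(x) for every x ∈ E. -/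
open MeasureTheory Filter Topology

/-- `f` is a bounded Borel measurable real-valued function. -/
def IsBb {E : Type*} [MeasurableSpace E] (f : E → ℝ) : Prop :=
  Measurable f ∧ ∃ C : ℝ, ∀ x, |f x| ≤ C

/-- `f` is a bounded continuous real-valued function. -/
def IsCb {E : Type*} [TopologicalSpace E] (f : E → ℝ) : Prop :=
  Continuous f ∧ ∃ C : ℝ, ∀ x, |f x| ≤ C

/-- The kernel operator associated with a kernel `k : E → Measure E`. -/
noncomputable def kOp {E : Type*} [MeasurableSpace E] (k : E → Measure E) (f : E → ℝ) (x : E) : ℝ :=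
  ∫ y, f y ∂(k x)

/-- `(k t)_{t>0}` is a positive semigroup of kernels on `E`, bounded by `M`:
measurability in `x`, total mass bounded by `M`, Chapman–Kolmogorov, and joint
measurability of `(t,x) ↦ (T(t)f)(x)` on `(0,∞) × E` for bounded measurable `f`. -/
def IsKernelSemigroup {E : Type*} [MeasurableSpace E] (k : ℝ → E → Measure E) (M : NNReal) : Prop :=
  (∀ t, 0 < t → ∀ A : Set E, MeasurableSet A → Measurable fun x => k t x A) ∧
  (∀ t, 0 < t → ∀ x, k t x Set.univ ≤ (M : ENNReal)) ∧
  (∀ t, 0 < t → ∀ s, 0 < s → ∀ x, ∀ A : Set E, MeasurableSet A →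
    k (t + s) x A = ∫⁻ y, k s y A ∂(k t x)) ∧
  (∀ f : E → ℝ, IsBb f → Measurable fun p : Set.Ioi (0:ℝ) × E => kOp (k p.1.1) f p.2)

/-- The Laplace transform (pseudo-resolvent) of the semigroup of kernel operators. -/
noncomputable def laplaceOp {E : Type*} [MeasurableSpace E]
    (k : ℝ → E → Measure E) (l : ℝ) (f : E → ℝ) (x : E) : ℝ :=
  ∫ t in Set.Ioi (0:ℝ), Real.exp (-l * t) * kOp (k t) f x

/-!
If `(u, f)` lies in the full generator of the limit, take `u_n := R_n(1)(u - f)` and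
`f_n := u_n - (u - f)`: then `u_n - f_n = u - f`, so `(u_n, f_n)` lies in the full generator of
`T_n`, and `u_n → R(1)(u - f) = u` by dominated convergence in `t`.

Conversely, monotonicity makes each kernel `k_n(t, x)` dominated by the limit kernel `k(t, x)`,
so for bounded `g_n → g` pointwise, `|T_n(t) g_n - T_n(t) g| ≤ T(t) |g_n - g| → 0` and hence
`T_n(t) g_n → T(t) g`. Dominated convergence in `t` then gives
`u_n = R_n(1)(u_n - f_n) → R(1)(u - f)`, and this limit must be `u`.
-/

open Set
open scoped NNReal

section KernelOperators

variable {E : Type*} [MeasurableSpace E]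

lemma IsBb.sub {u f : E → ℝ} (hu : IsBb u) (hf : IsBb f) : IsBb fun y => u y - f y := by
  obtain ⟨hum, Cu, hCu⟩ := hu
  obtain ⟨hfm, Cf, hCf⟩ := hf
  exact ⟨hum.sub hfm, Cu + Cf, fun x => (abs_sub _ _).trans (add_le_add (hCu x) (hCf x))⟩

lemma IsBb.exists_nonneg_bound {f : E → ℝ} (hf : IsBb f) : ∃ C, 0 ≤ C ∧ ∀ x, |f x| ≤ C := by
  obtain ⟨-, C, hC⟩ := hf
  exact ⟨max C 0, le_max_right _ _, fun x => (hC x).trans (le_max_left _ _)⟩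

lemma abs_integral_le_of_measure_univ_le {μ : Measure E} {M : ℝ≥0} (hμ : μ univ ≤ M)
    {g : E → ℝ} {C : ℝ} (hC : 0 ≤ C) (hg : ∀ y, |g y| ≤ C) : |∫ y, g y ∂μ| ≤ C * M := by
  have : IsFiniteMeasure μ := ⟨hμ.trans_lt ENNReal.coe_lt_top⟩
  calc |∫ y, g y ∂μ| ≤ C * μ.real univ :=
        norm_integral_le_of_norm_le_const (μ := μ) (f := g) (ae_of_all _ hg)
    _ ≤ C * M := by
      gcongr
      exact ENNReal.toReal_le_coe_of_le_coe hμ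

lemma MeasureTheory.Measure.le_of_monotone_of_tendsto_real {μ : ℕ → Measure E} {ν : Measure E}
    [∀ n, IsFiniteMeasure (μ n)] (hmono : Monotone μ)
    (hlim : ∀ A, MeasurableSet A → Tendsto (fun n => (μ n).real A) atTop (𝓝 (ν.real A)))
    (n : ℕ) : μ n ≤ ν := by
  refine Measure.le_iff.2 fun A hA => ?_
  by_cases hνA : ν A = ⊤
  · simp [hνA]
  have hmonoA : Monotone fun m => (μ m).real A :=
    fun m m' hmm' => ENNReal.toReal_mono (measure_ne_top _ _) (hmono hmm' A)
  exact (ENNReal.toReal_le_toReal (measure_ne_top _ _) hνA).1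
    (hmonoA.ge_of_tendsto (hlim A hA) n)

lemma tendsto_integral_of_le_measure {μ : ℕ → Measure E} {ν : Measure E} [IsFiniteMeasure ν]
    (hμν : ∀ n, μ n ≤ ν) {gseq : ℕ → E → ℝ} {g : E → ℝ} {C : ℝ}
    (hgm : ∀ n, Measurable (gseq n)) (hgC : ∀ n y, |gseq n y| ≤ C)
    (hg : ∀ y, Tendsto (fun n => gseq n y) atTop (𝓝 (g y)))
    (hμ : Tendsto (fun n => ∫ y, g y ∂(μ n)) atTop (𝓝 (∫ y, g y ∂ν))) :
    Tendsto (fun n => ∫ y, gseq n y ∂(μ n)) atTop (𝓝 (∫ y, g y ∂ν)) := by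
  have := fun n => isFiniteMeasure_of_le ν (hμν n)
  have hgm' : Measurable g := measurable_of_tendsto_metrizable hgm (tendsto_pi_nhds.2 hg)
  have hgC' : ∀ y, |g y| ≤ C := fun y => le_of_tendsto' ((hg y).abs) fun n => hgC n y
  have hdiffC : ∀ n y, |gseq n y - g y| ≤ C + C :=
    fun n y => (abs_sub _ _).trans (add_le_add (hgC n y) (hgC' y))
  have hdiff : Tendsto (fun n => ∫ y, |gseq n y - g y| ∂ν) atTop (𝓝 0) := by
    simpa using tendsto_integral_of_dominated_convergence (f := fun _ => 0) (fun _ => C + C)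
      (fun n => ((hgm n).sub hgm').abs.aestronglyMeasurable) (integrable_const (μ := ν) _)
      (fun n => ae_of_all _ fun y => by simpa using hdiffC n y)
      (ae_of_all _ fun y => by simpa using ((hg y).sub_const (g y)).abs)
  have hclose : ∀ n, |∫ y, gseq n y ∂(μ n) - ∫ y, g y ∂(μ n)| ≤ ∫ y, |gseq n y - g y| ∂ν := by
    intro n
    rw [← integral_sub (.of_bound (hgm n).aestronglyMeasurable C (ae_of_all _ (hgC n)))
      (.of_bound hgm'.aestronglyMeasurable C (ae_of_all _ hgC'))]
    refine abs_integral_le_integral_abs.trans <| integral_mono_measure (hμν n)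
      (ae_of_all _ fun y => abs_nonneg _) (.of_bound ((hgm n).sub hgm').abs.aestronglyMeasurable
        (C + C) (ae_of_all _ fun y => by simpa using hdiffC n y))
  simpa using (squeeze_zero_norm hclose hdiff).add hμ

lemma integrableOn_exp_neg_mul_Ioi {l : ℝ} (hl : 0 < l) (B : ℝ) :
    IntegrableOn (fun t => Real.exp (-l * t) * B) (Ioi 0) :=
  (integrableOn_exp_mul_Ioi (neg_lt_zero.2 hl) 0).mul_const B

lemma abs_laplaceOp_le {k : ℝ → E → Measure E} {l B : ℝ} (hl : 0 < l) {g : E → ℝ} {x : E}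
    (hB : ∀ t, 0 < t → |kOp (k t) g x| ≤ B) : |laplaceOp k l g x| ≤ B / l := by
  have hbound : ∀ᵐ t ∂(volume.restrict (Ioi (0:ℝ))),
      ‖Real.exp (-l * t) * kOp (k t) g x‖ ≤ Real.exp (-l * t) * B := by
    refine (ae_restrict_iff' measurableSet_Ioi).2 (ae_of_all _ fun t ht => ?_)
    rw [Real.norm_eq_abs, abs_mul, Real.abs_exp]
    exact mul_le_mul_of_nonneg_left (hB t ht) (Real.exp_pos _).le
  calc |laplaceOp k l g x| ≤ ∫ t in Ioi 0, Real.exp (-l * t) * B :=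
        norm_integral_le_of_norm_le (integrableOn_exp_neg_mul_Ioi hl B) hbound
    _ = B / l := by
      rw [integral_mul_const, integral_exp_mul_Ioi (neg_lt_zero.2 hl)]
      field_simp
      simp

lemma tendsto_laplaceOp {kseq : ℕ → ℝ → E → Measure E} {k : ℝ → E → Measure E}
    {gseq : ℕ → E → ℝ} {g : E → ℝ} {l B : ℝ} (hl : 0 < l) {x : E}
    (hmeas : ∀ n, AEStronglyMeasurable (fun t => kOp (kseq n t) (gseq n) x)
      (volume.restrict (Ioi 0)))
    (hB : ∀ n t, 0 < t → |kOp (kseq n t) (gseq n) x| ≤ B)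
    (hconv : ∀ t, 0 < t →
      Tendsto (fun n => kOp (kseq n t) (gseq n) x) atTop (𝓝 (kOp (k t) g x))) :
    Tendsto (fun n => laplaceOp (kseq n) l (gseq n) x) atTop (𝓝 (laplaceOp k l g x)) := by
  refine tendsto_integral_of_dominated_convergence _
    (fun n => (Real.continuous_exp.comp_aestronglyMeasurable
      (aestronglyMeasurable_id.const_mul (-l))).mul (hmeas n))
    (integrableOn_exp_neg_mul_Ioi hl B) (fun n => ?_) ?_
  · refine (ae_restrict_iff' measurableSet_Ioi).2 (ae_of_all _ fun t ht => ?_)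
    rw [Real.norm_eq_abs, abs_mul, Real.abs_exp]
    exact mul_le_mul_of_nonneg_left (hB n t ht) (Real.exp_pos _).le
  · exact (ae_restrict_iff' measurableSet_Ioi).2
      (ae_of_all _ fun t ht => (hconv t ht).const_mul _)

lemma aestronglyMeasurable_kOp {k : ℝ → E → Measure E} {g : E → ℝ}
    (hk : Measurable fun p : Ioi (0:ℝ) × E => kOp (k p.1.1) g p.2) (x : E) :
    AEStronglyMeasurable (fun t => kOp (k t) g x) (volume.restrict (Ioi 0)) := by
  rw [← map_comap_subtype_coe measurableSet_Ioi,
    (MeasurableEmbedding.subtype_coe measurableSet_Ioi).aestronglyMeasurable_map_iff]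
  exact (hk.comp (measurable_id.prodMk measurable_const)).aestronglyMeasurable

lemma measurable_laplaceOp {k : ℝ → E → Measure E} {g : E → ℝ}
    (hk : Measurable fun p : Ioi (0:ℝ) × E => kOp (k p.1.1) g p.2) (l : ℝ) :
    Measurable (laplaceOp k l g) := by
  have : SigmaFinite (volume.comap (Subtype.val : Ioi (0:ℝ) → ℝ)) :=
    SigmaFinite.of_map _ measurable_subtype_coe.aemeasurable
      (by rw [map_comap_subtype_coe measurableSet_Ioi]; infer_instance)
  have hsubtype : laplaceOp k l g = fun x =>
      ∫ t : Ioi (0:ℝ), Real.exp (-l * t) * kOp (k t) g x ∂(volume.comap Subtype.val) :=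
    funext fun x => (integral_subtype_comap measurableSet_Ioi _).symm
  rw [hsubtype]
  refine StronglyMeasurable.measurable (StronglyMeasurable.integral_prod_left ?_)
  exact ((Real.measurable_exp.comp
    ((measurable_subtype_coe.comp measurable_fst).const_mul (-l))).mul hk).stronglyMeasurable

lemma isBb_indicator_one {A : Set E} (hA : MeasurableSet A) : IsBb (A.indicator (1 : E → ℝ)) :=
  ⟨measurable_one.indicator hA, 1, fun y => by by_cases h : y ∈ A <;> simp [h]⟩

lemma kOp_indicator_one (k : E → Measure E) {A : Set E} (hA : MeasurableSet A) (x : E) :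
    kOp k (A.indicator 1) x = (k x).real A :=
  integral_indicator_one hA

lemma le_of_monotone_of_tendsto_kOp {kseq : ℕ → E → Measure E} {k : E → Measure E} {x : E}
    [∀ n, IsFiniteMeasure (kseq n x)]
    (hmono : ∀ n A, MeasurableSet A → kseq n x A ≤ kseq (n + 1) x A)
    (hlim : ∀ f, IsBb f → Tendsto (fun n => kOp (kseq n) f x) atTop (𝓝 (kOp k f x))) (n : ℕ) :
    kseq n x ≤ k x :=
  Measure.le_of_monotone_of_tendsto_real
    (monotone_nat_of_le_succ fun n => Measure.le_iff.2 (hmono n))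
    (fun A hA => by simpa only [kOp_indicator_one _ hA] using hlim _ (isBb_indicator_one hA)) n

namespace IsKernelSemigroup

variable {k : ℝ → E → Measure E} {M : ℝ≥0} {t : ℝ}

lemma measure_univ_le (hk : IsKernelSemigroup k M) (ht : 0 < t) (x : E) : k t x univ ≤ M :=
  hk.2.1 t ht x

lemma measurable_kOp (hk : IsKernelSemigroup k M) {g : E → ℝ} (hg : IsBb g) :
    Measurable fun p : Ioi (0:ℝ) × E => kOp (k p.1.1) g p.2 :=
  hk.2.2.2 g hg

lemma isFiniteMeasure (hk : IsKernelSemigroup k M) (ht : 0 < t) (x : E) :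
    IsFiniteMeasure (k t x) :=
  ⟨(hk.measure_univ_le ht x).trans_lt ENNReal.coe_lt_top⟩

lemma abs_kOp_le (hk : IsKernelSemigroup k M) (ht : 0 < t) {g : E → ℝ} {C : ℝ} (hC : 0 ≤ C)
    (hg : ∀ y, |g y| ≤ C) (x : E) : |kOp (k t) g x| ≤ C * M :=
  abs_integral_le_of_measure_univ_le (hk.measure_univ_le ht x) hC hg

end IsKernelSemigroup

def InFullGenerator (k : ℝ → E → Measure E) (u f : E → ℝ) : Prop :=
  ∀ x, laplaceOp k 1 (fun y => u y - f y) x = u x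

variable {kseq : ℕ → ℝ → E → Measure E} {klim : ℝ → E → Measure E} {M : ℝ≥0}

lemma exists_approx_of_inFullGenerator (hsg : ∀ n, IsKernelSemigroup (kseq n) M)
    (hlim : ∀ f : E → ℝ, IsBb f → ∀ t, 0 < t → ∀ x,
      Tendsto (fun n => kOp (kseq n t) f x) atTop (𝓝 (kOp (klim t) f x)))
    {u f : E → ℝ} (hu : IsBb u) (hf : IsBb f) (hR : InFullGenerator klim u f) :
    ∃ useq fseq : ℕ → E → ℝ,
      (∀ n, IsBb (useq n) ∧ IsBb (fseq n)) ∧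
      (∀ n, InFullGenerator (kseq n) (useq n) (fseq n)) ∧
      (∃ C : ℝ, ∀ n, ∀ x, |useq n x| ≤ C ∧ |fseq n x| ≤ C) ∧
      (∀ x, Tendsto (fun n => useq n x) atTop (𝓝 (u x))) ∧
      (∀ x, Tendsto (fun n => fseq n x) atTop (𝓝 (f x))) := by
  set g := fun y => u y - f y
  have hg : IsBb g := hu.sub hf
  obtain ⟨C, hC, hgC⟩ := hg.exists_nonneg_bound
  set useq := fun n => laplaceOp (kseq n) 1 g
  have huseqC : ∀ n x, |useq n x| ≤ C * M := fun n x => by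
    simpa using abs_laplaceOp_le one_pos fun t ht => (hsg n).abs_kOp_le ht hC hgC x
  have hfseqC : ∀ n x, |useq n x - g x| ≤ C * M + C :=
    fun n x => (abs_sub _ _).trans (add_le_add (huseqC n x) (hgC x))
  have huseq_lim : ∀ x, Tendsto (fun n => useq n x) atTop (𝓝 (u x)) := fun x =>
    hR x ▸ tendsto_laplaceOp one_pos
      (fun n => aestronglyMeasurable_kOp ((hsg n).measurable_kOp hg) x)
      (fun n t ht => (hsg n).abs_kOp_le ht hC hgC x) (fun t ht => hlim g hg t ht x)
  refine ⟨useq, fun n x => useq n x - g x, fun n => ?_, fun n x => ?_,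
    ⟨C * M + C, fun n x => ⟨(huseqC n x).trans (by linarith), hfseqC n x⟩⟩, huseq_lim,
    fun x => by simpa [g] using (huseq_lim x).sub_const (g x)⟩
  · have hm : Measurable (useq n) := measurable_laplaceOp ((hsg n).measurable_kOp hg) 1
    exact ⟨⟨hm, _, huseqC n⟩, ⟨hm.sub hg.1, _, hfseqC n⟩⟩
  · simp only [sub_sub_cancel]
    rfl

lemma inFullGenerator_of_approx (hsg : ∀ n, IsKernelSemigroup (kseq n) M)
    (hmono : ∀ n, ∀ t, 0 < t → ∀ x, ∀ A : Set E, MeasurableSet A →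
      kseq n t x A ≤ kseq (n + 1) t x A)
    (hlimsg : IsKernelSemigroup klim M)
    (hlim : ∀ f : E → ℝ, IsBb f → ∀ t, 0 < t → ∀ x,
      Tendsto (fun n => kOp (kseq n t) f x) atTop (𝓝 (kOp (klim t) f x)))
    {u f : E → ℝ} (hu : IsBb u) (hf : IsBb f) {useq fseq : ℕ → E → ℝ}
    (hBb : ∀ n, IsBb (useq n) ∧ IsBb (fseq n))
    (hgen : ∀ n, InFullGenerator (kseq n) (useq n) (fseq n))
    (hC : ∃ C : ℝ, ∀ n, ∀ x, |useq n x| ≤ C ∧ |fseq n x| ≤ C)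
    (hu_lim : ∀ x, Tendsto (fun n => useq n x) atTop (𝓝 (u x)))
    (hf_lim : ∀ x, Tendsto (fun n => fseq n x) atTop (𝓝 (f x))) :
    InFullGenerator klim u f := by
  intro x
  obtain ⟨C, hC⟩ := hC
  set gseq := fun n y => useq n y - fseq n y
  have hgseq : ∀ n, IsBb (gseq n) := fun n => (hBb n).1.sub (hBb n).2
  have hgseqC : ∀ n y, |gseq n y| ≤ C + C :=
    fun n y => (abs_sub _ _).trans (add_le_add (hC n y).1 (hC n y).2)
  have hdom : ∀ t, 0 < t → ∀ n, kseq n t x ≤ klim t x := fun t ht =>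
    have := fun n => (hsg n).isFiniteMeasure ht x
    le_of_monotone_of_tendsto_kOp (fun n => hmono n t ht x) fun g hg => hlim g hg t ht x
  have hconv : ∀ t, 0 < t → Tendsto (fun n => kOp (kseq n t) (gseq n) x) atTop
      (𝓝 (kOp (klim t) (fun y => u y - f y) x)) := fun t ht =>
    have := hlimsg.isFiniteMeasure ht x
    tendsto_integral_of_le_measure (hdom t ht) (fun n => (hgseq n).1) hgseqC
      (fun y => (hu_lim y).sub (hf_lim y)) (hlim _ (hu.sub hf) t ht x)
  have hR := tendsto_laplaceOp one_pos
    (fun n => aestronglyMeasurable_kOp ((hsg n).measurable_kOp (hgseq n)) x)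
    (fun n t ht => (hsg n).abs_kOp_le ht ((abs_nonneg _).trans (hgseqC 0 x)) (hgseqC n) x) hconv
  exact tendsto_nhds_unique (hR.congr fun n => hgen n x) (hu_lim x)

end KernelOperators

theorem full_generator_of_limit_semigroup_general
    {E : Type*} [MeasurableSpace E]
    (kseq : ℕ → ℝ → E → Measure E) (klim : ℝ → E → Measure E) (M : NNReal)
    (hsg : ∀ n, IsKernelSemigroup (kseq n) M)
    (hmono : ∀ n, ∀ t, 0 < t → ∀ x, ∀ A : Set E, MeasurableSet A →
      kseq n t x A ≤ kseq (n + 1) t x A)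
    (hlimsg : IsKernelSemigroup klim M)
    (hlim : ∀ f : E → ℝ, IsBb f → ∀ t, 0 < t → ∀ x,
      Tendsto (fun n => kOp (kseq n t) f x) atTop (𝓝 (kOp (klim t) f x)))
    (u f : E → ℝ) (hu : IsBb u) (hf : IsBb f) :
    (∀ x, laplaceOp klim 1 (fun y => u y - f y) x = u x) ↔
      ∃ useq fseq : ℕ → E → ℝ,
        (∀ n, IsBb (useq n) ∧ IsBb (fseq n)) ∧
        (∀ n, ∀ x, laplaceOp (kseq n) 1 (fun y => useq n y - fseq n y) x = useq n x) ∧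
        (∃ C : ℝ, ∀ n, ∀ x, |useq n x| ≤ C ∧ |fseq n x| ≤ C) ∧
        (∀ x, Tendsto (fun n => useq n x) atTop (𝓝 (u x))) ∧
        (∀ x, Tendsto (fun n => fseq n x) atTop (𝓝 (f x))) :=
  ⟨exists_approx_of_inFullGenerator hsg hlim hu hf,
    fun ⟨_, _, hBb, hgen, hC, hu_lim, hf_lim⟩ =>
      inFullGenerator_of_approx hsg hmono hlimsg hlim hu hf hBb hgen hC hu_lim hf_lim⟩

/-- Characterisation of the full generator of the limit semigroup of an increasing,
uniformly bounded sequence of positive semigroups of kernel operators: `(u,f)`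
belongs to the full generator of the limit semigroup iff there are uniformly bounded
pairs `(u_n, f_n)` in the full generators of the approximating semigroups converging
pointwise to `(u, f)`. -/
theorem full_generator_of_limit_semigroup
    {E : Type*} [TopologicalSpace E] [PolishSpace E] [MeasurableSpace E] [BorelSpace E]
    (kseq : ℕ → ℝ → E → Measure E) (klim : ℝ → E → Measure E) (M : NNReal)
    (hsg : ∀ n, IsKernelSemigroup (kseq n) M)
    (hmono : ∀ n, ∀ t, 0 < t → ∀ x, ∀ A : Set E, MeasurableSet A →
      kseq n t x A ≤ kseq (n + 1) t x A)
    (hlimsg : IsKernelSemigroup klim M)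
    (hlim : ∀ f : E → ℝ, IsBb f → ∀ t, 0 < t → ∀ x,
      Tendsto (fun n => kOp (kseq n t) f x) atTop (𝓝 (kOp (klim t) f x)))
    (u f : E → ℝ) (hu : IsBb u) (hf : IsBb f) :
    (∀ x, laplaceOp klim 1 (fun y => u y - f y) x = u x) ↔
      ∃ useq fseq : ℕ → E → ℝ,
        (∀ n, IsBb (useq n) ∧ IsBb (fseq n)) ∧
        (∀ n, ∀ x, laplaceOp (kseq n) 1 (fun y => useq n y - fseq n y) x = useq n x) ∧
        (∃ C : ℝ, ∀ n, ∀ x, |useq n x| ≤ C ∧ |fseq n x| ≤ C) ∧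
        (∀ x, Tendsto (fun n => useq n x) atTop (𝓝 (u x))) ∧
        (∀ x, Tendsto (fun n => fseq n x) atTop (𝓝 (f x))) :=
  full_generator_of_limit_semigroup_general kseq klim M hsg hmono hlimsg hlim u f hu hf
end

section
/- Let (T_n(t))_{t>0}, n ∈ ℕ, be a sequence of sub-Markovian semigroups of kernel operators on a Polish space E, increasing in n (T_n(t) ≤ T_{n+1}(t) for all n and t > 0), and assume that every T_n enjoys the strong Feller property. Let (T(t))_{t>0} be the limit semigroup given by (T(t)f)(x) = lim_{n→∞}(T_n(t)f)(x) for f ∈ B_b(E). For t > 0 and x ∈ E let J_x(t) := { f ∈ B_b(E) : T(t)f is continuous at the point x }. Then: (i) J_x(t) is a linear subspace of B_b(E); (ii) if f, g ∈ B_b(E) satisfy 0 ≤ f ≤ g pointwise and g ∈ J_x(t), then f ∈ J_x(t); (iii) if the constant function 𝟙 belongs to J_x(t), then J_x(t) = B_b(E). -/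
open MeasureTheory Filter Topology

/-- The set of bounded measurable functions whose image under a kernel operator is
continuous at a given point. -/
def Jset {E : Type*} [MeasurableSpace E] [TopologicalSpace E]
    (k : E → Measure E) (x : E) : Set (E → ℝ) :=
  {f | IsBb f ∧ ContinuousAt (kOp k f) x}

lemma isBb_integrable {E : Type*} [MeasurableSpace E] {μ : Measure E}
    (hμ : μ Set.univ ≤ 1) {f : E → ℝ} (hf : IsBb f) : Integrable f μ := by
  haveI : IsFiniteMeasure μ := ⟨lt_of_le_of_lt hμ (by norm_num)⟩
  obtain ⟨C, hC⟩ := hf.2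
  exact ⟨hf.1.aestronglyMeasurable,
    HasFiniteIntegral.of_bounded (C := C) (ae_of_all _ fun y => by
      simpa [Real.norm_eq_abs] using hC y)⟩

lemma mono_meas_integral {E : Type*} [MeasurableSpace E] {μ ν : Measure E}
    (hν : ν Set.univ ≤ 1) (h : ∀ A : Set E, MeasurableSet A → μ A ≤ ν A)
    {f : E → ℝ} (hf : IsBb f) (h0 : ∀ y, 0 ≤ f y) :
    ∫ y, f y ∂μ ≤ ∫ y, f y ∂ν :=
  integral_mono_measure (Measure.le_iff.2 h) (ae_of_all _ h0) (isBb_integrable hν hf)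

lemma lsc_aux {E : Type*} [TopologicalSpace E] {x : E} {u : E → ℝ} {un : ℕ → E → ℝ}
    (hcont : ∀ n, ContinuousAt (un n) x) (hle : ∀ n y, un n y ≤ u y)
    (htend : Tendsto (fun n => un n x) atTop (𝓝 (u x))) :
    ∀ a < u x, ∀ᶠ y in 𝓝 x, a < u y := by
  intro a ha
  obtain ⟨n, hn⟩ := (htend.eventually (eventually_gt_nhds ha)).exists
  filter_upwards [(hcont n).eventually (eventually_gt_nhds hn)] with y hy
  exact lt_of_lt_of_le hy (hle n y)

lemma contAt_of_lsc {E : Type*} [TopologicalSpace E] {x : E} {u v : E → ℝ}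
    (hu : ∀ a < u x, ∀ᶠ y in 𝓝 x, a < u y)
    (hv : ∀ a < v x, ∀ᶠ y in 𝓝 x, a < v y)
    (hw : ContinuousAt (fun y => u y + v y) x) : ContinuousAt u x := by
  rw [ContinuousAt, tendsto_order]
  refine ⟨hu, fun a ha => ?_⟩
  have h1 : ∀ᶠ y in 𝓝 x, u y + v y < u x + v x + (a - u x) / 2 :=
    hw.eventually (eventually_lt_nhds (by linarith))
  have h2 : ∀ᶠ y in 𝓝 x, v x - (a - u x) / 2 < v y := hv _ (by linarith)
  filter_upwards [h1, h2] with y hy1 hy2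
  linarith

/-- Properties of the sets `J_x(t)` for the limit semigroup of an increasing sequence
of strong Feller sub-Markovian semigroups of kernel operators: `J_x(t)` is a vector
space, it is solid from below on nonnegative functions, and it is everything as soon
as it contains the constant function `𝟙`. -/
theorem Jset_properties
    {E : Type*} [TopologicalSpace E] [PolishSpace E] [MeasurableSpace E] [BorelSpace E]
    (kseq : ℕ → ℝ → E → Measure E) (klim : ℝ → E → Measure E)
    (hsg : ∀ n, IsKernelSemigroup (kseq n) 1)
    (hmono : ∀ n, ∀ t, 0 < t → ∀ x, ∀ A : Set E, MeasurableSet A →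
      kseq n t x A ≤ kseq (n + 1) t x A)
    (hsf : ∀ n, ∀ t, 0 < t → ∀ f : E → ℝ, IsBb f → IsCb (kOp (kseq n t) f))
    (hlimsg : IsKernelSemigroup klim 1)
    (hlim : ∀ f : E → ℝ, IsBb f → ∀ t, 0 < t → ∀ x,
      Tendsto (fun n => kOp (kseq n t) f x) atTop (𝓝 (kOp (klim t) f x)))
    (t : ℝ) (ht : 0 < t) (x : E) :
    ((0 : E → ℝ) ∈ Jset (klim t) x ∧
      (∀ f g : E → ℝ, f ∈ Jset (klim t) x → g ∈ Jset (klim t) x →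
        f + g ∈ Jset (klim t) x) ∧
      (∀ c : ℝ, ∀ f : E → ℝ, f ∈ Jset (klim t) x → c • f ∈ Jset (klim t) x)) ∧
    (∀ f g : E → ℝ, IsBb f → (∀ y, 0 ≤ f y) → (∀ y, f y ≤ g y) →
      g ∈ Jset (klim t) x → f ∈ Jset (klim t) x) ∧
    ((fun _ => (1 : ℝ)) ∈ Jset (klim t) x → Jset (klim t) x = {f | IsBb f}) := by
  have hmasslim : ∀ y, klim t y Set.univ ≤ 1 := by
    intro y; simpa using hlimsg.2.1 t ht y
  have hmassn : ∀ n y, kseq n t y Set.univ ≤ 1 := by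
    intro n y; simpa using (hsg n).2.1 t ht y
  have hint : ∀ {h : E → ℝ}, IsBb h → ∀ y, Integrable h (klim t y) :=
    fun hB y => isBb_integrable (hmasslim y) hB
  -- additivity of the limit operator
  have hadd : ∀ (f g : E → ℝ), IsBb f → IsBb g → ∀ y,
      kOp (klim t) (fun z => f z + g z) y = kOp (klim t) f y + kOp (klim t) g y := by
    intro f g hf hg y
    exact integral_add (hint hf y) (hint hg y)
  have hsmul : ∀ (c : ℝ) (f : E → ℝ) y,
      kOp (klim t) (fun z => c * f z) y = c * kOp (klim t) f y := by
    intro c f y; exact integral_const_mul c f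
  -- IsBb closure facts
  have hBbAdd : ∀ {f g : E → ℝ}, IsBb f → IsBb g → IsBb (fun z => f z + g z) := by
    rintro f g ⟨hfm, Cf, hCf⟩ ⟨hgm, Cg, hCg⟩
    exact ⟨hfm.add hgm, Cf + Cg, fun z => (abs_add_le _ _).trans (add_le_add (hCf z) (hCg z))⟩
  have hBbSmul : ∀ (c : ℝ) {f : E → ℝ}, IsBb f → IsBb (fun z => c * f z) := by
    rintro c f ⟨hfm, Cf, hCf⟩
    exact ⟨hfm.const_mul c, |c| * Cf, fun z => by
      rw [abs_mul]; exact mul_le_mul_of_nonneg_left (hCf z) (abs_nonneg c)⟩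
  -- lower semicontinuity of the limit operator on nonnegative functions
  have hlsc : ∀ (h : E → ℝ), IsBb h → (∀ y, 0 ≤ h y) →
      ∀ a < kOp (klim t) h x, ∀ᶠ y in 𝓝 x, a < kOp (klim t) h y := by
    intro h hB h0
    have hstep : ∀ n y, kOp (kseq n t) h y ≤ kOp (kseq (n+1) t) h y := by
      intro n y
      exact mono_meas_integral (hmassn (n+1) y) (fun A hA => hmono n t ht y A hA) hB h0
    have hle : ∀ n y, kOp (kseq n t) h y ≤ kOp (klim t) h y := by
      intro n y
      refine ge_of_tendsto (hlim h hB t ht y) (eventually_atTop.2 ⟨n, fun m hm => ?_⟩)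
      exact monotone_nat_of_le_succ (fun k => hstep k y) hm
    exact lsc_aux (fun n => ((hsf n t ht h hB).1).continuousAt) hle (hlim h hB t ht x)
  refine ⟨⟨?_, ?_, ?_⟩, ?_, ?_⟩
  · -- zero
    refine ⟨⟨measurable_const, 0, fun z => by simp⟩, ?_⟩
    have : kOp (klim t) (0 : E → ℝ) = fun _ => (0:ℝ) := by
      funext y; simp [kOp]
    rw [this]; exact continuousAt_const
  · -- add
    rintro f g ⟨hfB, hfc⟩ ⟨hgB, hgc⟩
    refine ⟨hBbAdd hfB hgB, ?_⟩
    have : kOp (klim t) (f + g) = fun y => kOp (klim t) f y + kOp (klim t) g y := by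
      funext y; exact hadd f g hfB hgB y
    rw [this]; exact hfc.add hgc
  · -- smul
    rintro c f ⟨hfB, hfc⟩
    refine ⟨hBbSmul c hfB, ?_⟩
    have : kOp (klim t) (c • f) = fun y => c * kOp (klim t) f y := by
      funext y; exact hsmul c f y
    rw [this]; exact hfc.const_mul c
  · -- solid from below
    rintro f g hfB hf0 hfg ⟨hgB, hgc⟩
    refine ⟨hfB, ?_⟩
    set d : E → ℝ := fun y => g y - f y with hd
    have hdB : IsBb d := by
      obtain ⟨hfm, Cf, hCf⟩ := hfB; obtain ⟨hgm, Cg, hCg⟩ := hgB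
      exact ⟨hgm.sub hfm, Cg + Cf, fun z => (abs_sub _ _).trans (add_le_add (hCg z) (hCf z))⟩
    have hd0 : ∀ y, 0 ≤ d y := fun y => sub_nonneg.2 (hfg y)
    have hsum : ∀ y, kOp (klim t) f y + kOp (klim t) d y = kOp (klim t) g y := by
      intro y
      rw [← hadd f d hfB hdB y]
      congr 1; funext z; simp [hd]
    have hwc : ContinuousAt (fun y => kOp (klim t) f y + kOp (klim t) d y) x := by
      have : (fun y => kOp (klim t) f y + kOp (klim t) d y) = kOp (klim t) g := by
        funext y; exact hsum y
      rw [this]; exact hgc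
    exact contAt_of_lsc (hlsc f hfB hf0) (hlsc d hdB hd0) hwc
  · -- 𝟙 ∈ J ⇒ J = B_b
    intro hone
    apply Set.eq_of_subset_of_subset (fun f hf => hf.1)
    intro f hfB
    obtain ⟨hfm, C, hC⟩ := hfB
    have hC0 : 0 ≤ C := le_trans (abs_nonneg _) (hC x)
    -- scalar multiples of 𝟙 are in J (using the smul part proved as above)
    have hsmulJ : ∀ c : ℝ, (fun _ : E => c) ∈ Jset (klim t) x := by
      intro c
      have h1B : IsBb (fun _ : E => (1:ℝ)) := hone.1
      refine ⟨⟨measurable_const, |c|, fun z => le_refl _⟩, ?_⟩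
      have : kOp (klim t) (fun _ : E => c) = fun y => c * kOp (klim t) (fun _ => (1:ℝ)) y := by
        funext y
        rw [← hsmul c (fun _ => (1:ℝ)) y]
        congr 1; funext z; simp
      rw [this]; exact hone.2.const_mul c
    -- f + C ∈ J by solidity below 2C
    have hf'B : IsBb (fun y => f y + C) := hBbAdd ⟨hfm, C, hC⟩ (hsmulJ C).1
    have hf'0 : ∀ y, 0 ≤ f y + C := fun y => by
      have := (abs_le.1 (hC y)).1; linarith
    have hf'le : ∀ y, f y + C ≤ (fun _ : E => 2 * C) y := fun y => by
      have := (abs_le.1 (hC y)).2; simp; linarith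
    have hf'J : (fun y => f y + C) ∈ Jset (klim t) x := by
      rcases hsmulJ (2 * C) with ⟨h2B, h2c⟩
      refine ⟨hf'B, ?_⟩
      set d : E → ℝ := fun y => (2*C) - (f y + C) with hd
      have hdB : IsBb d := by
        obtain ⟨hm, Cd, hCd⟩ := hf'B
        exact ⟨(measurable_const.sub hm), |2*C| + Cd, fun z =>
          (abs_sub _ _).trans (add_le_add le_rfl (hCd z))⟩
      have hd0 : ∀ y, 0 ≤ d y := fun y => sub_nonneg.2 (hf'le y)
      have hwc : ContinuousAt (fun y => kOp (klim t) (fun y => f y + C) y + kOp (klim t) d y) x := by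
        have : (fun y => kOp (klim t) (fun y => f y + C) y + kOp (klim t) d y)
            = kOp (klim t) (fun _ : E => 2*C) := by
          funext y
          rw [← hadd _ d hf'B hdB y]
          congr 1; funext z; simp [hd]
        rw [this]; exact h2c
      exact contAt_of_lsc (hlsc _ hf'B hf'0) (hlsc d hdB hd0) hwc
    -- f = (f + C) + (-C)
    have : ContinuousAt (kOp (klim t) f) x := by
      have heq : (fun y => kOp (klim t) (fun z => f z + C) y + kOp (klim t) (fun _ : E => -C) y)
          = kOp (klim t) f := by
        funext y
        rw [← hadd _ _ hf'B (hsmulJ (-C)).1 y]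
        congr 1; funext z; ring
      rw [← heq]; exact (hf'J.2).add (hsmulJ (-C)).2
    exact ⟨⟨hfm, C, hC⟩, this⟩
end
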